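/- Let F1, F2, F3 be consecutive fragments with |F1| = |F3| ≤ |F2|/8 and suppose F2 is periodic. Then every highly periodic pattern P (per(P) ≤ |P|/4) with an occurrence starting in F1 and ending in F3 satisfies per(P) = per(F2), and the occurrence is contained in the run of T extending F2 with period per(F2). -/

import Mathlib

/-- `p` is a period of the string (list) `S`. -/
def IsPeriod {α : Type*} (S : List α) (p : ℕ) : Prop :=
  0 < p ∧ ∀ i, i + p < S.length → S[i]? = S[i + p]?

/-- The smallest period of `S`. -/
noncomputable def minPeriod {α : Type*} (S : List α) : ℕ :=
  sInf {p | IsPeriod S p}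

/-- `P` occurs in `S` at (0-indexed) position `i`. -/
def OccursAt {α : Type*} (P S : List α) (i : ℕ) : Prop :=
  (S.drop i).take P.length = P ∧ i + P.length ≤ S.length

/-- The fragment `T[a..b]` (0-indexed, inclusive). -/
def frag {α : Type*} (T : List α) (a b : ℕ) : List α :=
  (T.drop a).take (b + 1 - a)

/-- `T[a..b]` is a run (maximal periodic fragment) of `T`. -/
def IsRun {α : Type*} (T : List α) (a b : ℕ) : Prop :=
  a ≤ b ∧ b < T.length ∧
  2 * minPeriod (frag T a b) ≤ b + 1 - a ∧
  (a = 0 ∨ T[a - 1]? ≠ T[a - 1 + minPeriod (frag T a b)]?) ∧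
  (b + 1 = T.length ∨ T[b + 1]? ≠ T[b + 1 - minPeriod (frag T a b)]?)

/-- The occurrence of the square `U · U` at position `s` of `T` is induced by the run `T[a..b]`. -/
def InducedOcc {α : Type*} (T U : List α) (s a b : ℕ) : Prop :=
  U ≠ [] ∧ IsRun T a b ∧ OccursAt (U ++ U) T s ∧ a ≤ s ∧
  s + 2 * U.length ≤ b + 1 ∧ minPeriod U = minPeriod (frag T a b)

/-- The `k`-th power `V^k` of a string `V`. -/
def listPow {α : Type*} (V : List α) (k : ℕ) : List α :=
  (List.replicate k V).flatten

/-! The occurrence of `P` contains `F2`, so `per(P)` is a period of `F2` and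
`q := per(F2) ≤ per(P)`. As `|F2| ≥ per(P) + q`, every position of the occurrence is
`per(P)`-congruent to one at which the period `q` of `F2` applies; hence `q` is a period of `P`
and `per(P) = q`. Extending the `q`-periodic occurrence maximally to both sides gives the run,
whose smallest period is again `q` because it contains `F2`. -/

theorem Nat.exists_modEq_mem_Ico (c j : ℕ) {p : ℕ} (hp : 0 < p) :
    ∃ t, c ≤ t ∧ t < c + p ∧ t ≡ j [MOD p] := by
  have hlt := Nat.mod_lt (j + (p - c % p)) hp
  refine ⟨c + (j + (p - c % p)) % p, by omega, by omega, ?_⟩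
  have hshift : c + (j + (p - c % p)) = j + p * (c / p + 1) := by
    have := Nat.mod_add_div c p
    have := Nat.mod_lt c hp
    rw [Nat.mul_add]
    omega
  calc c + (j + (p - c % p)) % p ≡ c + (j + (p - c % p)) [MOD p] :=
        Nat.ModEq.add_left c (Nat.mod_modEq _ p)
    _ = j + p * (c / p + 1) := hshift
    _ ≡ j [MOD p] := Nat.add_mul_mod_self_left j p _

section Periodicity

variable {α : Type*} {T : List α} {p q a b c d : ℕ}

/-- `p` is a period of the window `T[a..b)` (half-open, unlike `frag`); positions past the end
of `T` read as `none`. -/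
def HasPeriodOn (T : List α) (p a b : ℕ) : Prop :=
  ∀ j, a ≤ j → j + p < b → T[j]? = T[j + p]?

namespace HasPeriodOn

theorem mono {a' b' : ℕ} (h : HasPeriodOn T p a b) (ha : a ≤ a') (hb : b' ≤ b) :
    HasPeriodOn T p a' b' :=
  fun j hj hjb => h j (ha.trans hj) (by omega)

theorem getElem?_add_mul (h : HasPeriodOn T p a b) {j : ℕ} (hj : a ≤ j) :
    ∀ k, j + k * p < b → T[j]? = T[j + k * p]?
  | 0, _ => by simp
  | k + 1, hk => by
    rw [Nat.succ_mul] at hk ⊢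
    rw [h.getElem?_add_mul hj k (by omega), ← add_assoc]
    exact h _ (by omega) (by omega)

theorem getElem?_eq_of_modEq (h : HasPeriodOn T p a b) {u v : ℕ} (hu : a ≤ u) (hv : a ≤ v)
    (hub : u < b) (hvb : v < b) (huv : u ≡ v [MOD p]) : T[u]? = T[v]? := by
  wlog hle : u ≤ v generalizing u v
  · exact (this hv hu hvb hub huv.symm (by omega)).symm
  obtain ⟨k, hk⟩ := (Nat.modEq_iff_dvd' hle).1 huv
  obtain rfl : v = u + k * p := by rw [Nat.mul_comm]; omega
  exact h.getElem?_add_mul hu k hvb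

theorem of_window (hp : HasPeriodOn T p a b) (hq : HasPeriodOn T q c d) (hp0 : 0 < p)
    (hac : a ≤ c) (hdb : d ≤ b) (hwin : c + p + q ≤ d) : HasPeriodOn T q a b := by
  intro j hj hjb
  obtain ⟨t, hct, htc, htj⟩ := Nat.exists_modEq_mem_Ico c j hp0
  calc T[j]? = T[t]? := hp.getElem?_eq_of_modEq hj (by omega) (by omega) (by omega) htj.symm
    _ = T[t + q]? := hq t hct (by omega)
    _ = T[j + q]? :=
      hp.getElem?_eq_of_modEq (by omega) (by omega) (by omega) hjb (htj.add_right q)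

theorem exists_left_maximal (h : HasPeriodOn T p a b) :
    ∃ a' ≤ a, HasPeriodOn T p a' b ∧ (a' = 0 ∨ T[a' - 1]? ≠ T[a' - 1 + p]?) := by
  induction a with
  | zero => exact ⟨0, le_rfl, h, Or.inl rfl⟩
  | succ n ih =>
    by_cases hn : T[n]? = T[n + p]?
    · have hext : HasPeriodOn T p n b := fun j hj hjb => by
        rcases hj.eq_or_lt with rfl | hj
        · exact hn
        · exact h j hj hjb
      obtain ⟨a', ha', ha'per, ha'max⟩ := ih hext
      exact ⟨a', by omega, ha'per, ha'max⟩
    · exact ⟨n + 1, le_rfl, h, Or.inr hn⟩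

theorem exists_right_maximal (h : HasPeriodOn T p a b) (hpb : p ≤ b) (hb : b ≤ T.length) :
    ∃ b' ≥ b, b' ≤ T.length ∧ HasPeriodOn T p a b' ∧
      (b' = T.length ∨ T[b']? ≠ T[b' - p]?) := by
  induction hk : T.length - b generalizing b with
  | zero => exact ⟨b, le_rfl, hb, h, Or.inl (by omega)⟩
  | succ k ih =>
    by_cases hbp : T[b]? = T[b - p]?
    · have hext : HasPeriodOn T p a (b + 1) := fun j hj hjb => by
        rcases (Nat.lt_succ_iff.1 hjb).eq_or_lt with hjp | hjp
        · rw [hjp, hbp, show b - p = j by omega]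
        · exact h j hj hjp
      obtain ⟨b', hb', hb'T, hb'per, hb'max⟩ := ih hext (by omega) (by omega) (by omega)
      exact ⟨b', by omega, hb'T, hb'per, hb'max⟩
    · exact ⟨b, le_rfl, hb, h, Or.inr hbp⟩

end HasPeriodOn

theorem isPeriod_iff_hasPeriodOn {S : List α} (hS : ∀ j < S.length, S[j]? = T[a + j]?) :
    IsPeriod S p ↔ 0 < p ∧ HasPeriodOn T p a (a + S.length) := by
  refine and_congr_right fun _ => ⟨fun h j hj hjb => ?_, fun h j hj => ?_⟩
  · have hper := h (j - a) (by omega)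
    rwa [hS _ (by omega), hS _ (by omega), show a + (j - a) = j by omega,
      show a + (j - a + p) = j + p by omega] at hper
  · rw [hS _ (by omega), hS _ hj, ← add_assoc]
    exact h _ (by omega) (by omega)

theorem getElem?_frag (T : List α) {a b k : ℕ} (hk : k < b + 1 - a) :
    (frag T a b)[k]? = T[a + k]? := by
  rw [frag, List.getElem?_take_of_lt hk, List.getElem?_drop]

theorem length_frag (hb : b < T.length) : (frag T a b).length = b + 1 - a := by
  rw [frag, List.length_take, List.length_drop]
  omega

theorem isPeriod_frag_iff (hab : a ≤ b) (hb : b < T.length) :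
    IsPeriod (frag T a b) p ↔ 0 < p ∧ HasPeriodOn T p a (b + 1) := by
  rw [isPeriod_iff_hasPeriodOn fun j hj => getElem?_frag T (by rwa [length_frag hb] at hj),
    length_frag hb, show a + (b + 1 - a) = b + 1 by omega]

theorem OccursAt.isPeriod_iff {P : List α} {s : ℕ} (h : OccursAt P T s) :
    IsPeriod P p ↔ 0 < p ∧ HasPeriodOn T p s (s + P.length) :=
  isPeriod_iff_hasPeriodOn fun j hj => by
    conv_lhs => rw [← h.1]
    rw [List.getElem?_take_of_lt hj, List.getElem?_drop]

theorem minPeriod_isPeriod {S : List α} (hS : S ≠ []) : IsPeriod S (minPeriod S) :=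
  Nat.sInf_mem (s := {p | IsPeriod S p})
    ⟨S.length, (⟨List.length_pos_iff.2 hS, fun _ _ => by omega⟩ : IsPeriod S S.length)⟩

theorem minPeriod_le {S : List α} (h : IsPeriod S p) : minPeriod S ≤ p :=
  Nat.sInf_le h

theorem minPeriod_frag_spec (hab : a ≤ b) (hb : b < T.length) :
    0 < minPeriod (frag T a b) ∧ HasPeriodOn T (minPeriod (frag T a b)) a (b + 1) :=
  (isPeriod_frag_iff hab hb).1 <| minPeriod_isPeriod <|
    List.ne_nil_of_length_pos (by rw [length_frag hb]; omega)

theorem minPeriod_frag_le (hab : a ≤ b) (hb : b < T.length) (hp0 : 0 < p)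
    (h : HasPeriodOn T p c d) (hca : c ≤ a) (hbd : b + 1 ≤ d) : minPeriod (frag T a b) ≤ p :=
  minPeriod_le ((isPeriod_frag_iff hab hb).2 ⟨hp0, h.mono hca hbd⟩)

end Periodicity

theorem stmt16_general {α : Type*} (T P : List α) (i x y : ℕ)
    (hx8 : 8 * x ≤ y)
    (hF2per : 2 * minPeriod (frag T (i + x) (i + x + y - 1)) ≤ y)
    (hhp : 4 * minPeriod P ≤ P.length)
    (s : ℕ) (hocc : OccursAt P T s)
    (hs1 : i ≤ s) (hs2 : s < i + x)
    (he1 : i + x + y < s + P.length) (he2 : s + P.length ≤ i + 2 * x + y) :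
    minPeriod P = minPeriod (frag T (i + x) (i + x + y - 1)) ∧
    ∃ a b, IsRun T a b ∧
      minPeriod (frag T a b) = minPeriod (frag T (i + x) (i + x + y - 1)) ∧
      a ≤ i + x ∧ i + x + y ≤ b + 1 ∧ a ≤ s ∧ s + P.length ≤ b + 1 := by
  set q := minPeriod (frag T (i + x) (i + x + y - 1))
  have hT := hocc.2
  obtain ⟨hq0, hq⟩ := minPeriod_frag_spec (T := T) (a := i + x) (b := i + x + y - 1)
    (by omega) (by omega)
  have hP : P ≠ [] := List.ne_nil_of_length_pos (by omega)
  obtain ⟨hp0, hp⟩ := (hocc.isPeriod_iff (p := minPeriod P)).1 (minPeriod_isPeriod hP)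
  have hqp : q ≤ minPeriod P :=
    minPeriod_frag_le (by omega) (by omega) hp0 hp (by omega) (by omega)
  -- `16 per(P) ≤ 4 |P| ≤ 8x + 4y ≤ 5y` and `2q ≤ y`, so `F2` has length `≥ per(P) + q`
  have hPq : HasPeriodOn T q s (s + P.length) :=
    hp.of_window hq hp0 (by omega) (by omega) (by omega)
  have hpq : minPeriod P = q := le_antisymm (minPeriod_le (hocc.isPeriod_iff.2 ⟨hq0, hPq⟩)) hqp
  obtain ⟨a, has, haper, hamax⟩ := hPq.exists_left_maximal
  obtain ⟨b, hb, hbT, hper, hbmax⟩ := haper.exists_right_maximal (by omega) hT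
  obtain ⟨hr0, hr⟩ := minPeriod_frag_spec (T := T) (a := a) (b := b - 1) (by omega) (by omega)
  have hrq : minPeriod (frag T a (b - 1)) = q :=
    le_antisymm (minPeriod_frag_le (by omega) (by omega) hq0 hper le_rfl (by omega))
      (minPeriod_frag_le (by omega) (by omega) hr0 hr (by omega) (by omega))
  refine ⟨hpq, a, b - 1, ⟨by omega, by omega, by omega, ?_, ?_⟩, hrq, by omega, by omega, has,
    by omega⟩
  · rwa [hrq]
  · rwa [hrq, show b - 1 + 1 = b by omega]

/-- Consecutive fragments `F1 = T[i..i+x-1]`, `F2 = T[i+x..i+x+y-1]`,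
`F3 = T[i+x+y..i+2x+y-1]` with `8x ≤ y` and `F2` periodic: every highly periodic
pattern `P` with an occurrence starting in `F1` and ending in `F3` satisfies
`per(P) = per(F2)`, and the occurrence is contained in a run of `T` extending `F2`
with period `per(F2)`. -/
theorem stmt16 {α : Type*} (T P : List α) (i x y : ℕ)
    (hy0 : 0 < y) (hx8 : 8 * x ≤ y) (hrange : i + 2 * x + y ≤ T.length)
    (hF2per : 2 * minPeriod (frag T (i + x) (i + x + y - 1)) ≤ y)
    (hP : P ≠ []) (hhp : 4 * minPeriod P ≤ P.length)
    (s : ℕ) (hocc : OccursAt P T s)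
    (hs1 : i ≤ s) (hs2 : s < i + x)
    (he1 : i + x + y < s + P.length) (he2 : s + P.length ≤ i + 2 * x + y) :
    minPeriod P = minPeriod (frag T (i + x) (i + x + y - 1)) ∧
    ∃ a b, IsRun T a b ∧
      minPeriod (frag T a b) = minPeriod (frag T (i + x) (i + x + y - 1)) ∧
      a ≤ i + x ∧ i + x + y ≤ b + 1 ∧ a ≤ s ∧ s + P.length ≤ b + 1 :=
  stmt16_general T P i x y hx8 hF2per hhp s hocc hs1 hs2 he1 he2
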